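/- The function φ(θ) = sin θ / (1 + sin θ − cos θ) satisfies lim_{θ→0⁺} φ(θ) = 1 and φ(π/4) = 1/√2. Consequently the map θ ↦ arccos(φ(θ)) is a bijection from (0, π/4] onto (0, π/4]. -/

import Mathlib

/-!
With `s = sin (θ/2)` and `c = cos (θ/2)` we have `sin θ = 2 s c` and `1 - cos θ = 2 s²`, so
`φ θ = c / (c + s) = 1 / (1 + tan (θ/2))` on `(0, π)`. The right-hand side is continuous and strictly
decreasing on `[0, π)`, equal to `1` at `0`, and `φ (π/4) = cos (π/4)` because `sin (π/4) = cos (π/4)`.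
So `arccos ∘ φ` extends to a continuous strictly increasing map on `[0, π/4]` fixing both endpoints,
and the intermediate value theorem makes it a bijection of `(0, π/4]`.
-/

open Real Set Filter Topology

theorem ContinuousOn.bijOn_Ioc_of_strictMonoOn {α δ : Type*} [ConditionallyCompleteLinearOrder α]
    [TopologicalSpace α] [OrderTopology α] [DenselyOrdered α] [LinearOrder δ] [TopologicalSpace δ]
    [OrderClosedTopology δ] {f : α → δ} {a b : α} (hab : a ≤ b)
    (hf : ContinuousOn f (Icc a b)) (hmono : StrictMonoOn f (Icc a b)) :
    BijOn f (Ioc a b) (Ioc (f a) (f b)) :=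
  hf.image_Ioc_of_strictMonoOn hab hmono ▸ (hmono.injOn.mono Ioc_subset_Icc_self).bijOn_image

noncomputable def phi (θ : ℝ) : ℝ := sin θ / (1 + sin θ - cos θ)

noncomputable def phiHalfAngle (θ : ℝ) : ℝ := (1 + tan (θ / 2))⁻¹

lemma phi_eq_phiHalfAngle {θ : ℝ} (h0 : 0 < θ) (hπ : θ < π) : phi θ = phiHalfAngle θ := by
  obtain ⟨x, rfl⟩ : ∃ x, θ = 2 * x := ⟨θ / 2, by ring⟩
  have hs : 0 < sin x := sin_pos_of_pos_of_lt_pi (by linarith) (by linarith)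
  have hc : 0 < cos x := cos_pos_of_mem_Ioo ⟨by linarith, by linarith⟩
  have hden : 1 + 2 * sin x * cos x - (1 - 2 * sin x ^ 2) = 2 * sin x * (cos x + sin x) := by ring
  rw [phi, phiHalfAngle, mul_div_cancel_left₀ _ two_ne_zero, sin_two_mul, cos_two_mul_eq_one_sub,
    hden, mul_div_mul_left _ _ (by positivity), tan_eq_sin_div_cos, one_add_div hc.ne', inv_div]

lemma phi_pi_div_four_eq_cos : phi (π / 4) = cos (π / 4) := by
  rw [phi, sin_pi_div_four, cos_pi_div_four, add_sub_cancel_right, div_one]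

lemma phi_pi_div_four : phi (π / 4) = 1 / √2 := by
  rw [phi_pi_div_four_eq_cos, cos_pi_div_four]
  field_simp
  simp

lemma phiHalfAngle_zero : phiHalfAngle 0 = 1 := by
  simp [phiHalfAngle]

lemma tan_half_nonneg {θ : ℝ} (hθ : θ ∈ Ico 0 π) : 0 ≤ tan (θ / 2) :=
  tan_nonneg_of_nonneg_of_le_pi_div_two (by linarith [hθ.1]) (by linarith [hθ.2])

lemma phiHalfAngle_mem_Ioc {θ : ℝ} (hθ : θ ∈ Ico 0 π) : phiHalfAngle θ ∈ Ioc 0 1 :=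
  have ht := tan_half_nonneg hθ
  ⟨inv_pos.2 (by linarith), inv_le_one_of_one_le₀ (by linarith)⟩

lemma continuousOn_phiHalfAngle : ContinuousOn phiHalfAngle (Ico 0 π) := by
  refine (continuousOn_const.add (continuousOn_tan_Ioo.comp (by fun_prop) ?_)).inv₀ ?_
  · exact fun θ hθ => ⟨by linarith [hθ.1, pi_pos], by linarith [hθ.2]⟩
  · exact fun θ hθ => (inv_pos.1 (phiHalfAngle_mem_Ioc hθ).1).ne'

lemma strictAntiOn_phiHalfAngle : StrictAntiOn phiHalfAngle (Ico 0 π) := by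
  intro a ha b hb hab
  have hta := tan_half_nonneg ha
  have htab : tan (a / 2) < tan (b / 2) :=
    strictMonoOn_tan ⟨by linarith [ha.1, pi_pos], by linarith [ha.2]⟩
      ⟨by linarith [hb.1, pi_pos], by linarith [hb.2]⟩ (by linarith)
  exact (inv_lt_inv₀ (by linarith) (by linarith)).2 (by linarith)

lemma strictMonoOn_arccos_phiHalfAngle : StrictMonoOn (arccos ∘ phiHalfAngle) (Ico 0 π) := by
  have hmem {θ : ℝ} (hθ : θ ∈ Ico 0 π) : phiHalfAngle θ ∈ Icc (-1) 1 :=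
    Ioc_subset_Icc_self.trans (Icc_subset_Icc_left (by norm_num)) (phiHalfAngle_mem_Ioc hθ)
  exact fun a ha b hb hab =>
    strictAntiOn_arccos (hmem hb) (hmem ha) (strictAntiOn_phiHalfAngle ha hb hab)

lemma tendsto_phi_nhdsGT_zero : Tendsto phi (𝓝[>] 0) (𝓝 1) := by
  have hψ := (continuousOn_phiHalfAngle.continuousWithinAt ⟨le_rfl, pi_pos⟩).tendsto
  rw [phiHalfAngle_zero] at hψ
  refine (hψ.mono_left ?_).congr' ?_
  · rw [← nhdsWithin_Ioo_eq_nhdsGT pi_pos]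
    exact nhdsWithin_mono _ Ioo_subset_Ico_self
  · filter_upwards [Ioo_mem_nhdsGT pi_pos] with θ hθ using (phi_eq_phiHalfAngle hθ.1 hθ.2).symm

lemma bijOn_arccos_phi : BijOn (arccos ∘ phi) (Ioc 0 (π / 4)) (Ioc 0 (π / 4)) := by
  have hπ : π / 4 < π := by linarith [pi_pos]
  have hsub : Icc 0 (π / 4) ⊆ Ico 0 π := Icc_subset_Ico_right hπ
  have hbij := (continuous_arccos.comp_continuousOn (continuousOn_phiHalfAngle.mono hsub))
    |>.bijOn_Ioc_of_strictMonoOn (by positivity) (strictMonoOn_arccos_phiHalfAngle.mono hsub)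
  rw [Function.comp_apply, Function.comp_apply, phiHalfAngle_zero, arccos_one,
    ← phi_eq_phiHalfAngle (by positivity) hπ, phi_pi_div_four_eq_cos,
    arccos_cos (by positivity) hπ.le] at hbij
  exact hbij.congr fun θ hθ =>
    congrArg arccos (phi_eq_phiHalfAngle hθ.1 (hθ.2.trans_lt hπ)).symm

theorem stmt_11 :
    Tendsto (fun θ : ℝ => sin θ / (1 + sin θ - cos θ)) (nhdsWithin 0 (Ioi 0)) (nhds 1) ∧
    sin (π / 4) / (1 + sin (π / 4) - cos (π / 4)) = 1 / Real.sqrt 2 ∧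
    BijOn (fun θ : ℝ => arccos (sin θ / (1 + sin θ - cos θ))) (Ioc 0 (π / 4)) (Ioc 0 (π / 4)) :=
  ⟨tendsto_phi_nhdsGT_zero, phi_pi_div_four, bijOn_arccos_phi⟩
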